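/- arXiv:1105.5311 — 6 statements merged into one kernel-verified Lean document; each statement's English description precedes it below -/
import Mathlib

section
/- Let (λ₁, λ₂) ∈ Λ, i.e., 0 ≤ λ₂ ≤ λ₁ ≤ 1 and 0 < 1 - (λ₁+λ₂)λ₂ ≤ λ₁. If real numbers μ_α, μ_β satisfy λ₁ μ_α + (1 - (λ₁+λ₂)λ₂) μ_β ≥ 0 and μ_α ≤ μ_β, then μ_α + μ_β ≥ 0. -/
/-- Membership in the parameter set Λ. -/
def InLambda (x y : ℝ) : Prop :=
  0 ≤ y ∧ y ≤ x ∧ x ≤ 1 ∧ 0 < 1 - (x + y) * y ∧ 1 - (x + y) * y ≤ x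

theorem add_nonneg_of_mul_add_mul_nonneg {l c a b : ℝ} (hc : 0 < c) (hcl : c ≤ l)
    (h : 0 ≤ l * a + c * b) (hab : a ≤ b) : 0 ≤ a + b := by
  have hl : 0 < l := hc.trans_le hcl
  have hb : 0 ≤ b := by
    by_contra! hb
    have : l * a + c * b < 0 :=
      add_neg (mul_neg_of_pos_of_neg hl (hab.trans_lt hb)) (mul_neg_of_pos_of_neg hc hb)
    linarith
  have hmul : 0 ≤ l * (a + b) :=
    calc 0 ≤ l * a + c * b := h
      _ ≤ l * a + l * b := by gcongr
      _ = l * (a + b) := by ring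
  exact nonneg_of_mul_nonneg_right hmul hl

theorem stmt_3 (l1 l2 : ℝ) (hΛ : InLambda l1 l2) (a b : ℝ)
    (h : 0 ≤ l1 * a + (1 - (l1 + l2) * l2) * b) (hab : a ≤ b) :
    0 ≤ a + b := by
  obtain ⟨-, -, -, hc, hcl⟩ := hΛ
  exact add_nonneg_of_mul_add_mul_nonneg hc hcl h hab
end

section
/- Let (λ₁, λ₂) ∈ Λ and let μ₁ ≤ 0 ≤ μ₂ ≤ μ₃ be real numbers satisfying μ₁ + λ₁ μ₂ + λ₂ μ₃ ≥ 0 and λ₁ μ₁ + (1-(λ₁+λ₂)λ₂) μ₂ ≥ 0. Then μ₂ μ₃ + λ₁ μ₁ μ₃ + λ₂ μ₁ μ₂ ≥ 0. -/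
theorem stmt_4 (l1 l2 : ℝ) (hΛ : InLambda l1 l2) (μ1 μ2 μ3 : ℝ)
    (h1 : μ1 ≤ 0) (h2 : 0 ≤ μ2) (h3 : μ2 ≤ μ3)
    (hA : 0 ≤ μ1 + l1 * μ2 + l2 * μ3)
    (hB : 0 ≤ l1 * μ1 + (1 - (l1 + l2) * l2) * μ2) :
    0 ≤ μ2 * μ3 + l1 * μ1 * μ3 + l2 * μ1 * μ2 := by
  obtain ⟨h0, hyx, hx1, hq1, hq2⟩ := hΛ
  have hl1 : 0 ≤ l1 := le_trans h0 hyx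
  have hC : 0 ≤ μ1 + (l1 + l2) * μ3 := by nlinarith
  have hμ3 : 0 ≤ μ3 := le_trans h2 h3
  nlinarith [mul_nonneg (mul_nonneg h0 h2) hC, mul_nonneg hμ3 hB]
end

section
/- Let N ≥ 3, (λ₁, λ₂) ∈ Λ, and let μ₁ ≤ μ₂ ≤ ⋯ ≤ μ_N be real numbers satisfying μ_α + λ₁ μ_β + λ₂ μ_γ ≥ 0 and λ₁ μ_α + (1-(λ₁+λ₂)λ₂) μ_β ≥ 0 for all α < β < γ. If Σ_{α=1}^N μ_α = 0, then μ_α = 0 for all α. -/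
/-!
Let `S = -μ₀`. Since `μ₀` is the smallest entry and the entries sum to zero, `S ≥ 0`.
Taking `α = 0` in the second inequality and using `0 < 1 - (λ₁ + λ₂)λ₂ ≤ λ₁` gives `μ_β ≥ S` for
every `β ≠ 0`, so `0 = ∑ μ ≥ (N - 2) S`. As `N ≥ 3` this forces `S = 0`, and then all entries are
nonnegative with zero sum.
-/

open Finset

section

variable {ι K : Type*} [Fintype ι] [Field K] [LinearOrder K] [IsStrictOrderedRing K]

lemma apply_nonpos_of_forall_le_of_sum_eq_zero {f : ι → K} {a : ι} (hmin : ∀ j, f a ≤ f j)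
    (hsum : ∑ j, f j = 0) : f a ≤ 0 := by
  obtain ⟨j, -, hj⟩ := exists_le_of_sum_le (s := univ) (f := f) (g := 0) ⟨a, mem_univ a⟩
    (by simp [hsum])
  exact (hmin j).trans hj

lemma eq_zero_of_sum_eq_zero_of_forall_neg_le [DecidableEq ι] {f : ι → K} {a : ι}
    (hcard : 2 < Fintype.card ι) (hmin : ∀ j, f a ≤ f j) (hbal : ∀ j ≠ a, -f a ≤ f j)
    (hsum : ∑ j, f j = 0) (j : ι) : f j = 0 := by
  have ha_nonpos : f a ≤ 0 := apply_nonpos_of_forall_le_of_sum_eq_zero hmin hsum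
  have hrest : ((Fintype.card ι : K) - 1) * -f a ≤ ∑ j ∈ univ.erase a, f j := by
    have := card_nsmul_le_sum (univ.erase a) f (-f a) fun j hj => hbal j (ne_of_mem_erase hj)
    rwa [card_erase_of_mem (mem_univ a), card_univ, nsmul_eq_mul,
      Nat.cast_pred (Fintype.card_pos_iff.2 ⟨a⟩)] at this
  have hcard' : (2 : K) < Fintype.card ι := by exact_mod_cast hcard
  have ha_zero : f a = 0 := by
    rw [← add_sum_erase univ f (mem_univ a)] at hsum
    nlinarith
  exact (sum_eq_zero_iff_of_nonneg (fun i _ => ha_zero ▸ hmin i)).1 hsum j (mem_univ j)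

end

lemma neg_le_of_mul_add_mul_nonneg {K : Type*} [Field K] [LinearOrder K] [IsStrictOrderedRing K]
    {a b x y : K} (hb : 0 < b) (hba : b ≤ a) (hx : x ≤ 0) (h : 0 ≤ a * x + b * y) : -x ≤ y := by
  nlinarith

theorem stmt_10_general (N : ℕ) (hN : 3 ≤ N) (l1 l2 : ℝ) (hΛ : InLambda l1 l2)
    (μ : Fin N → ℝ) (hmono : Monotone μ)
    (h2 : ∀ α β : Fin N, α < β → 0 ≤ l1 * μ α + (1 - (l1 + l2) * l2) * μ β)
    (hsum : ∑ α, μ α = 0) :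
    ∀ α, μ α = 0 := by
  obtain ⟨-, -, -, hc_pos, hc_le⟩ := hΛ
  have : NeZero N := ⟨by omega⟩
  have hmin : ∀ β, μ 0 ≤ μ β := fun β => hmono (Fin.zero_le β)
  have hμ₀ : μ 0 ≤ 0 := apply_nonpos_of_forall_le_of_sum_eq_zero hmin hsum
  refine eq_zero_of_sum_eq_zero_of_forall_neg_le (by rwa [Fintype.card_fin]) hmin
    (fun β hβ => ?_) hsum
  exact neg_le_of_mul_add_mul_nonneg hc_pos hc_le hμ₀ (h2 0 β (Fin.pos_iff_ne_zero.2 hβ))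

theorem stmt_10 (N : ℕ) (hN : 3 ≤ N) (l1 l2 : ℝ) (hΛ : InLambda l1 l2)
    (μ : Fin N → ℝ) (hmono : Monotone μ)
    (h1 : ∀ α β γ : Fin N, α < β → β < γ → 0 ≤ μ α + l1 * μ β + l2 * μ γ)
    (h2 : ∀ α β : Fin N, α < β → 0 ≤ l1 * μ α + (1 - (l1 + l2) * l2) * μ β)
    (hsum : ∑ α, μ α = 0) :
    ∀ α, μ α = 0 :=
  stmt_10_general N hN l1 l2 hΛ μ hmono h2 hsum
end

section
/- Let N ≥ 3. The intersection over all (λ₁,λ₂) ∈ Λ of the sets of (λ₁,λ₂)-nonnegative ordered tuples μ₁ ≤ ⋯ ≤ μ_N equals the set of tuples with μ_α ≥ 0 for all α. -/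
/-- The (λ₁,λ₂)-nonnegativity conditions for a tuple. -/
def IsLamNonneg {N : ℕ} (l1 l2 : ℝ) (μ : Fin N → ℝ) : Prop :=
  (∀ α β γ : Fin N, α < β → β < γ → 0 ≤ μ α + l1 * μ β + l2 * μ γ) ∧
  (∀ α β : Fin N, α < β → 0 ≤ l1 * μ α + (1 - (l1 + l2) * l2) * μ β)

/-! For `λ₁ = 1` the coefficient `1 - (1 + λ₂) λ₂` sweeps out all of `(0, 1]` as `λ₂` runs
through `[0, (√5 - 1)/2)`, so the second nonnegativity condition gives `μ_α + c μ_β ≥ 0` for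
arbitrarily small `c > 0`, whence `μ_α ≥ 0`. -/

open Filter Set Topology

lemma nonneg_of_forall_Ioc_add_mul_nonneg {a b : ℝ} (h : ∀ c ∈ Ioc (0 : ℝ) 1, 0 ≤ a + c * b) :
    0 ≤ a := by
  have hlim : Tendsto (fun c : ℝ => a + c * b) (𝓝[>] 0) (𝓝 a) := by
    have hcont : Continuous fun c : ℝ => a + c * b := by fun_prop
    simpa using hcont.continuousWithinAt.tendsto (x := 0) (s := Ioi 0)
  refine ge_of_tendsto hlim ?_
  filter_upwards [Ioc_mem_nhdsGT zero_lt_one] using h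

lemma one_sub_mul_eq_of_eq_sqrt {c y : ℝ} (hc : c ≤ 5 / 4) (hy : y = (√(5 - 4 * c) - 1) / 2) :
    1 - (1 + y) * y = c := by
  have hsq : √(5 - 4 * c) ^ 2 = 5 - 4 * c := Real.sq_sqrt (by linarith)
  subst hy
  nlinarith

lemma inLambda_one_sqrt {c : ℝ} (hc : c ∈ Ioc (0 : ℝ) 1) :
    InLambda 1 ((√(5 - 4 * c) - 1) / 2) := by
  obtain ⟨hc0, hc1⟩ := hc
  have hcoef := one_sub_mul_eq_of_eq_sqrt (c := c) (by linarith) rfl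
  have hsqrt_ge : 1 ≤ √(5 - 4 * c) := Real.le_sqrt_of_sq_le (by linarith)
  have hsqrt_le : √(5 - 4 * c) ≤ 3 := Real.sqrt_le_iff.mpr ⟨by norm_num, by linarith⟩
  refine ⟨by linarith, by linarith, le_rfl, ?_, ?_⟩ <;> rw [hcoef] <;> assumption

lemma nonneg_of_forall_isLamNonneg {N : ℕ} {μ : Fin N → ℝ}
    (h : ∀ l1 l2 : ℝ, InLambda l1 l2 → IsLamNonneg l1 l2 μ) {α β : Fin N} (hαβ : α < β) :
    0 ≤ μ α := by
  refine nonneg_of_forall_Ioc_add_mul_nonneg (b := μ β) fun c hc => ?_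
  have hsecond := (h 1 _ (inLambda_one_sqrt hc)).2 α β hαβ
  rwa [one_sub_mul_eq_of_eq_sqrt (by linarith [hc.2]) rfl, one_mul] at hsecond

lemma isLamNonneg_of_nonneg {N : ℕ} {l1 l2 : ℝ} {μ : Fin N → ℝ} (hl : InLambda l1 l2)
    (hμ : ∀ α, 0 ≤ μ α) : IsLamNonneg l1 l2 μ := by
  obtain ⟨hl2, hl21, -, hcoef, -⟩ := hl
  have hl1 : 0 ≤ l1 := hl2.trans hl21
  exact ⟨fun α β γ _ _ => by have := hμ α; have := hμ β; have := hμ γ; positivity,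
    fun α β _ => by have := hμ α; have := hμ β; positivity⟩

theorem stmt_12 (N : ℕ) (hN : 3 ≤ N) (μ : Fin N → ℝ) (hmono : Monotone μ) :
    (∀ l1 l2 : ℝ, InLambda l1 l2 → IsLamNonneg l1 l2 μ) ↔
    (∀ α, 0 ≤ μ α) := by
  refine ⟨fun h α => ?_, fun hμ l1 l2 hl => isLamNonneg_of_nonneg hl hμ⟩
  have hfirst : 0 ≤ μ ⟨0, by omega⟩ :=
    nonneg_of_forall_isLamNonneg h (β := ⟨1, by omega⟩) (by simp [Fin.lt_def])
  exact hfirst.trans (hmono (by simp [Fin.le_def]))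
end

section
/- Let (λ₁, λ₂) ∈ Λ, suppose μ₁ ≤ 0 ≤ μ₂ ≤ μ₃ ≤ ⋯ ≤ μ_N satisfy the (λ₁,λ₂)-nonnegativity conditions, and let c₁, c₂, c₃ be real antisymmetric structure-constant arrays (c_γ^{αβ} antisymmetric in all indices). Then the sum S = Σ_{α<β} ((c₁^{αβ})² + λ₁(c₂^{αβ})² + λ₂(c₃^{αβ})²) μ_α μ_β is nonnegative. -/
theorem stmt_17 (N : ℕ) (hN : 3 ≤ N) (l1 l2 : ℝ) (hΛ : InLambda l1 l2)
    (μ : Fin N → ℝ) (hmono : Monotone μ)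
    (hμ1 : μ ⟨0, by omega⟩ ≤ 0) (hμ2 : 0 ≤ μ ⟨1, by omega⟩)
    (hcond1 : ∀ α β γ : Fin N, α < β → β < γ → 0 ≤ μ α + l1 * μ β + l2 * μ γ)
    (hcond2 : ∀ α β : Fin N, α < β → 0 ≤ l1 * μ α + (1 - (l1 + l2) * l2) * μ β)
    -- totally antisymmetric structure constants `c g α β = c_g^{αβ}`
    (c : Fin N → Fin N → Fin N → ℝ)
    (hanti1 : ∀ g α β : Fin N, c g α β = - c g β α)
    (hanti2 : ∀ g α β : Fin N, c g α β = - c α g β) :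
    0 ≤ ∑ α : Fin N, ∑ β ∈ Finset.Ioi α,
      ((c ⟨0, by omega⟩ α β) ^ 2 + l1 * (c ⟨1, by omega⟩ α β) ^ 2 +
        l2 * (c ⟨2, by omega⟩ α β) ^ 2) * (μ α * μ β) := by
  obtain ⟨hy0, hyx, hx1, hspos, hsle⟩ := hΛ
  have hl1pos : 0 < l1 := by nlinarith
  have hsum : 1 ≤ l1 + l2 := by
    nlinarith [mul_nonneg hy0 hy0, mul_nonneg hy0 (hy0.trans hyx)]
  have hN' : 2 < N := by omega
  set e0 : Fin N := ⟨0, by omega⟩ with he0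
  set e1 : Fin N := ⟨1, by omega⟩ with he1
  set e2 : Fin N := ⟨2, by omega⟩ with he2
  have hμ1' : μ e0 ≤ 0 := hμ1
  have hμ2' : 0 ≤ μ e1 := hμ2
  have h01 : e0 < e1 := by simp [he0, he1, Fin.lt_def]
  have h12 : e1 < e2 := by simp [he1, he2, Fin.lt_def]
  have h02 : e0 < e2 := h01.trans h12
  -- vanishing structure constants with repeated indices
  have hz1 : ∀ g β : Fin N, c g g β = 0 := by
    intro g β; have := hanti2 g g β; linarith
  have hz2 : ∀ g α : Fin N, c g α α = 0 := by
    intro g α; have := hanti1 g α α; linarith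
  have hz3 : ∀ g α : Fin N, c g α g = 0 := by
    intro g α; have h := hanti2 g α g; rw [hz2] at h; linarith
  -- basic facts about μ
  have hμ3 : 0 ≤ μ e2 := hμ2'.trans (hmono h12.le)
  have hμ12 : μ e1 ≤ μ e2 := hmono h12.le
  -- the three key scalar inequalities
  have hA : 0 ≤ μ e1 + l1 * μ e0 := by
    have h1 := hcond2 e0 e1 h01
    nlinarith [mul_nonneg (mul_nonneg (by linarith : (0:ℝ) ≤ l1 + l2) hy0) hμ2']
  have hB : 0 ≤ μ e2 + l2 * μ e0 := by
    have h2 := hcond2 e0 e2 h02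
    nlinarith [mul_nonneg (mul_nonneg (by linarith : (0:ℝ) ≤ l1 + l2) hy0) hμ3,
      mul_nonpos_of_nonneg_of_nonpos (by linarith : (0:ℝ) ≤ l1 - l2) hμ1']
  have hC : 0 ≤ μ e1 * μ e2 + l1 * (μ e0 * μ e2) + l2 * (μ e0 * μ e1) := by
    have h1 := hcond2 e0 e1 h01
    have h2 := hcond2 e0 e2 h02
    have hl2u : (0:ℝ) ≤ (l1 + l2) * l2 := by positivity
    have P1 := mul_nonneg h1 (by nlinarith : (0:ℝ) ≤ l1 * μ e2 + l2 * μ e1)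
    have P2 := mul_nonneg (mul_nonneg (mul_nonneg hl1pos.le hl2u) hμ2')
      (by linarith : (0:ℝ) ≤ μ e2 - μ e1)
    have P3 : (0:ℝ) ≤ l2 * (l1 * (l1 + l2) - (1 - (l1 + l2) * l2)) * μ e1 ^ 2 := by
      have : (0:ℝ) ≤ l1 * (l1 + l2) - (1 - (l1 + l2) * l2) := by nlinarith
      positivity
    nlinarith [P1, P2, P3]
  -- abbreviation for the summand
  set f : Fin N → Fin N → ℝ := fun α β =>
    ((c e0 α β) ^ 2 + l1 * (c e1 α β) ^ 2 + l2 * (c e2 α β) ^ 2) * (μ α * μ β) with hf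
  have hcoef : ∀ α β : Fin N,
      0 ≤ (c e0 α β) ^ 2 + l1 * (c e1 α β) ^ 2 + l2 * (c e2 α β) ^ 2 := fun α β =>
    add_nonneg (add_nonneg (sq_nonneg _) (mul_nonneg hl1pos.le (sq_nonneg _)))
      (mul_nonneg hy0 (sq_nonneg _))
  show 0 ≤ ∑ α : Fin N, ∑ β ∈ Finset.Ioi α, f α β
  -- splitting the index sets
  have huniv : (Finset.univ : Finset (Fin N)) =
      insert e0 (insert e1 (insert e2 (Finset.Ioi e2))) := by
    ext a
    simp only [Finset.mem_univ, Finset.mem_insert, Finset.mem_Ioi, true_iff, he0, he1, he2,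
      Fin.ext_iff, Fin.lt_def]
    omega
  have hIoi0 : Finset.Ioi e0 = insert e1 (insert e2 (Finset.Ioi e2)) := by
    ext a
    simp only [Finset.mem_insert, Finset.mem_Ioi, he0, he1, he2, Fin.ext_iff, Fin.lt_def]
    omega
  have hIoi1 : Finset.Ioi e1 = insert e2 (Finset.Ioi e2) := by
    ext a
    simp only [Finset.mem_insert, Finset.mem_Ioi, he1, he2, Fin.ext_iff, Fin.lt_def]
    omega
  have hne12 : e1 ∉ insert e2 (Finset.Ioi e2) := by
    simp only [Finset.mem_insert, Finset.mem_Ioi, he1, he2, Fin.ext_iff, Fin.lt_def]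
    omega
  have hne2 : e2 ∉ Finset.Ioi e2 := by simp
  have hne01 : e0 ∉ insert e1 (insert e2 (Finset.Ioi e2)) := by
    simp only [Finset.mem_insert, Finset.mem_Ioi, he0, he1, he2, Fin.ext_iff, Fin.lt_def]
    omega
  rw [huniv, Finset.sum_insert hne01, Finset.sum_insert hne12, Finset.sum_insert hne2,
    hIoi0, Finset.sum_insert hne12, Finset.sum_insert hne2,
    hIoi1, Finset.sum_insert hne2]
  -- the boundary triple
  have hTriple : 0 ≤ f e0 e1 + (f e0 e2 + f e1 e2) := by
    have t1 : c e1 e0 e1 = 0 := hz3 e1 e0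
    have t2 : c e2 e0 e1 = c e0 e1 e2 := by
      rw [hanti2 e2 e0 e1, hanti1 e0 e2 e1, neg_neg]
    have t3 : c e1 e0 e2 = - c e0 e1 e2 := hanti2 e1 e0 e2
    have t4 : c e2 e0 e2 = 0 := hz3 e2 e0
    have t5 : c e2 e1 e2 = 0 := hz3 e2 e1
    have t6 : c e1 e1 e2 = 0 := hz1 e1 e2
    have t7 : c e0 e0 e1 = 0 := hz1 e0 e1
    have t8 : c e0 e0 e2 = 0 := hz1 e0 e2
    have heq : f e0 e1 + (f e0 e2 + f e1 e2) =
        (c e0 e1 e2) ^ 2 * (μ e1 * μ e2 + l1 * (μ e0 * μ e2) + l2 * (μ e0 * μ e1)) := by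
      simp only [hf, t1, t2, t3, t4, t5, t6, t7, t8]
      ring
    rw [heq]
    exact mul_nonneg (sq_nonneg _) hC
  -- the grouped sums over β > e2
  have hGroup : ∀ β ∈ Finset.Ioi e2, 0 ≤ f e0 β + f e1 β + f e2 β := by
    intro β hβ
    have hβ2 : e2 < β := Finset.mem_Ioi.mp hβ
    have hμβ : 0 ≤ μ β := hμ2'.trans (hmono (h12.le.trans hβ2.le))
    have u1 : c e0 e0 β = 0 := hz1 e0 β
    have u2 : c e1 e1 β = 0 := hz1 e1 β
    have u3 : c e2 e2 β = 0 := hz1 e2 β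
    have u4 : c e1 e0 β = - c e0 e1 β := hanti2 e1 e0 β
    have u5 : c e2 e0 β = - c e0 e2 β := hanti2 e2 e0 β
    have u6 : c e2 e1 β = - c e1 e2 β := hanti2 e2 e1 β
    have heq : f e0 β + f e1 β + f e2 β =
        (c e0 e1 β) ^ 2 * ((μ e1 + l1 * μ e0) * μ β)
        + (c e0 e2 β) ^ 2 * ((μ e2 + l2 * μ e0) * μ β)
        + (c e1 e2 β) ^ 2 * ((l2 * μ e1 + l1 * μ e2) * μ β) := by
      simp only [hf, u1, u2, u3, u4, u5, u6]
      ring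
    rw [heq]
    have q3 : 0 ≤ l2 * μ e1 + l1 * μ e2 :=
      add_nonneg (mul_nonneg hy0 hμ2') (mul_nonneg hl1pos.le hμ3)
    have := mul_nonneg (sq_nonneg (c e0 e1 β)) (mul_nonneg hA hμβ)
    have := mul_nonneg (sq_nonneg (c e0 e2 β)) (mul_nonneg hB hμβ)
    have := mul_nonneg (sq_nonneg (c e1 e2 β)) (mul_nonneg q3 hμβ)
    linarith
  have hS : 0 ≤ (∑ β ∈ Finset.Ioi e2, f e0 β) + (∑ β ∈ Finset.Ioi e2, f e1 β)
      + (∑ β ∈ Finset.Ioi e2, f e2 β) := by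
    rw [← Finset.sum_add_distrib, ← Finset.sum_add_distrib]
    exact Finset.sum_nonneg hGroup
  -- the tail
  have hT : 0 ≤ ∑ α ∈ Finset.Ioi e2, ∑ β ∈ Finset.Ioi α, f α β := by
    apply Finset.sum_nonneg
    intro α hα
    apply Finset.sum_nonneg
    intro β hβ
    have hα2 : e2 < α := Finset.mem_Ioi.mp hα
    have hμα : 0 ≤ μ α := hμ2'.trans (hmono (h12.le.trans hα2.le))
    have hμβ : 0 ≤ μ β := hμα.trans (hmono (Finset.mem_Ioi.mp hβ).le)
    exact mul_nonneg (hcoef α β) (mul_nonneg hμα hμβ)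
  linarith [hTriple, hS, hT]
end

section
/- Let γ ≥ δ > 0 and let c₁, c₂ be antisymmetric structure-constant arrays. Suppose μ₁ ≤ 0 ≤ μ₂ ≤ μ₃ ≤ ⋯ ≤ μ_N with γμ₁ + δμ₂ ≥ 0. Then Σ_{α<β} (γ(c₁^{αβ})² + δ(c₂^{αβ})²) μ_α μ_β ≥ 0. -/
theorem stmt_18 (N : ℕ) (hN : 2 ≤ N) (γ δ : ℝ) (hγδ : δ ≤ γ) (hδ : 0 < δ)
    (μ : Fin N → ℝ) (hmono : Monotone μ)
    (hμ1 : μ ⟨0, by omega⟩ ≤ 0) (hμ2 : 0 ≤ μ ⟨1, by omega⟩)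
    (h : 0 ≤ γ * μ ⟨0, by omega⟩ + δ * μ ⟨1, by omega⟩)
    -- totally antisymmetric structure constants `c g α β = c_g^{αβ}`
    (c : Fin N → Fin N → Fin N → ℝ)
    (hanti1 : ∀ g α β : Fin N, c g α β = - c g β α)
    (hanti2 : ∀ g α β : Fin N, c g α β = - c α g β) :
    0 ≤ ∑ α : Fin N, ∑ β ∈ Finset.Ioi α,
      (γ * (c ⟨0, by omega⟩ α β) ^ 2 + δ * (c ⟨1, by omega⟩ α β) ^ 2) *
        (μ α * μ β) := by
  set e0 : Fin N := ⟨0, by omega⟩ with he0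
  set e1 : Fin N := ⟨1, by omega⟩ with he1
  -- vanishing lemmas
  have hz1 : ∀ g β : Fin N, c g g β = 0 := by
    intro g β
    have := hanti2 g g β
    linarith
  have hz2 : ∀ g α : Fin N, c g α g = 0 := by
    intro g α
    have h1 := hanti2 g α g
    have h2 := hanti1 α g g
    linarith
  have hsq : ∀ β : Fin N, (c e1 e0 β) ^ 2 = (c e0 e1 β) ^ 2 := by
    intro β
    rw [hanti2 e1 e0 β]
    ring
  have hδμ : 0 ≤ δ * μ e0 + γ * μ e1 := by
    nlinarith [mul_nonneg (sub_nonneg.2 hγδ) (sub_nonneg.2 (hμ1.trans hμ2))]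
  have hmem0 : e0 ∉ insert e1 (Finset.Ioi e1) := by
    simp [Finset.mem_Ioi, Fin.lt_def, Fin.ext_iff, he0, he1]
  have hmem1 : e1 ∉ Finset.Ioi e1 := by simp
  have huniv : (Finset.univ : Finset (Fin N)) = insert e0 (insert e1 (Finset.Ioi e1)) := by
    ext x
    simp only [Finset.mem_univ, Finset.mem_insert, Finset.mem_Ioi, Fin.lt_def, Fin.ext_iff,
      he0, he1, true_iff]
    omega
  have hIoi0 : Finset.Ioi e0 = insert e1 (Finset.Ioi e1) := by
    ext x
    simp only [Finset.mem_insert, Finset.mem_Ioi, Fin.lt_def, Fin.ext_iff, he0, he1]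
    omega
  rw [huniv, Finset.sum_insert hmem0, Finset.sum_insert hmem1, hIoi0,
    Finset.sum_insert hmem1]
  have hF01 : (γ * (c e0 e0 e1) ^ 2 + δ * (c e1 e0 e1) ^ 2) * (μ e0 * μ e1) = 0 := by
    rw [hz1, hz2]; ring
  rw [hF01, zero_add, ← add_assoc, ← Finset.sum_add_distrib]
  have hA : 0 ≤ ∑ β ∈ Finset.Ioi e1,
      ((γ * (c e0 e0 β) ^ 2 + δ * (c e1 e0 β) ^ 2) * (μ e0 * μ β) +
       (γ * (c e0 e1 β) ^ 2 + δ * (c e1 e1 β) ^ 2) * (μ e1 * μ β)) := by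
    apply Finset.sum_nonneg
    intro β hβ
    have hβ2 : e1 ≤ β := le_of_lt (Finset.mem_Ioi.1 hβ)
    have hμβ : 0 ≤ μ β := hμ2.trans (hmono hβ2)
    rw [hz1 e0, hz1 e1, hsq]
    have : (γ * 0 ^ 2 + δ * (c e0 e1 β) ^ 2) * (μ e0 * μ β) +
        (γ * (c e0 e1 β) ^ 2 + δ * 0 ^ 2) * (μ e1 * μ β)
        = (c e0 e1 β) ^ 2 * ((δ * μ e0 + γ * μ e1) * μ β) := by ring
    rw [this]
    positivity
  have hB : 0 ≤ ∑ α ∈ Finset.Ioi e1, ∑ β ∈ Finset.Ioi α,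
      (γ * (c e0 α β) ^ 2 + δ * (c e1 α β) ^ 2) * (μ α * μ β) := by
    apply Finset.sum_nonneg
    intro α hα
    apply Finset.sum_nonneg
    intro β hβ
    have hα1 : e1 ≤ α := le_of_lt (Finset.mem_Ioi.1 hα)
    have hμα : 0 ≤ μ α := hμ2.trans (hmono hα1)
    have hμβ : 0 ≤ μ β := hμα.trans (hmono (le_of_lt (Finset.mem_Ioi.1 hβ)))
    have hc : 0 ≤ γ := hδ.le.trans hγδ
    positivity
  linarith
end
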